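/- For every s ∈ [0,1) and every diagonal real matrix U on ℂ^{2^N}, the Hermitian matrix h(s) = −(1−s)Δ + s·U has a unique (non-degenerate) lowest eigenvalue, and a corresponding eigenvector can be chosen with all entries strictly positive. -/

import Mathlib

/-- The graph Laplacian of the Hamming cube `{0,1}^N`. -/
noncomputable def hammingLap (N : ℕ) : Matrix (Fin N → Bool) (Fin N → Bool) ℝ :=
  fun σ σ' => if σ = σ' then -(N : ℝ) else if hammingDist σ σ' = 1 then 1 else 0

/-!
Perron–Frobenius for a real symmetric matrix `M` whose off-diagonal entries are `≤ 0`, and `< 0`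
along the edges of a connected graph (for `h(s)`, `s < 1`, the graph is the Hamming cube).
Let `E` be the least eigenvalue, so that `M - E` is positive semidefinite. Nonpositive
off-diagonal entries give `⟪|w|, M |w|⟫ ≤ ⟪w, M w⟫`, so with `w` a ground state `|w|` is one too.
A nonnegative eigenvector cannot vanish at a neighbour of a vertex where it is positive, so by
connectivity it is positive everywhere. Hence no ground state has a zero entry, and two ground
states agreeing at one vertex coincide: the ground state is simple.
-/

open Matrix Module

namespace SimpleGraph

variable {V : Type*} {G : SimpleGraph V}

lemma Reachable.of_forall_adj_imp {P : V → Prop} {u v : V} (h : G.Reachable u v)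
    (hP : ∀ x y, G.Adj x y → P x → P y) (hu : P u) : P v := by
  rw [reachable_iff_reflTransGen] at h
  induction h with
  | refl => exact hu
  | tail _ hadj ih => exact hP _ _ hadj ih

end SimpleGraph

def hammingGraph (ι : Type*) [Fintype ι] (β : ι → Type*) [∀ i, DecidableEq (β i)] :
    SimpleGraph (∀ i, β i) where
  Adj x y := hammingDist x y = 1
  symm := ⟨fun x y h => by rwa [hammingDist_comm]⟩
  loopless := ⟨fun x h => by simp at h⟩

section Hamming

variable {ι : Type*} [Fintype ι] {β : ι → Type*} [∀ i, DecidableEq (β i)]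

@[simp]
lemma hammingGraph_adj {x y : ∀ i, β i} : (hammingGraph ι β).Adj x y ↔ hammingDist x y = 1 :=
  Iff.rfl

lemma exists_hammingDist_eq_one_of_ne {x y : ∀ i, β i} (hxy : x ≠ y) :
    ∃ z, hammingDist x z = 1 ∧ hammingDist z y < hammingDist x y := by
  obtain ⟨i, hi⟩ := Function.ne_iff.mp hxy
  classical
  refine ⟨Function.update x i (y i), ?_, ?_⟩
  · have : ({j | x j ≠ Function.update x i (y i) j} : Finset ι) = {i} := by
      ext j
      by_cases hji : j = i
      · subst hji; simp [hi]
      · simp [hji]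
    simp [hammingDist, this]
  · have : ({j | Function.update x i (y i) j ≠ y j} : Finset ι)
        = ({j | x j ≠ y j} : Finset ι).erase i := by
      ext j
      by_cases hji : j = i
      · subst hji; simp
      · simp [hji]
    simp only [hammingDist, this]
    exact Finset.card_erase_lt_of_mem (by simpa using hi)

lemma hammingGraph_connected [Nonempty (∀ i, β i)] : (hammingGraph ι β).Connected := by
  refine .mk fun x y => ?_
  induction h : hammingDist x y using Nat.strong_induction_on generalizing x with
  | _ d ih =>
    obtain rfl | hxy := eq_or_ne x y
    · rfl
    obtain ⟨z, hxz, hzy⟩ := exists_hammingDist_eq_one_of_ne hxy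
    exact (hammingGraph_adj.mpr hxz).reachable.trans (ih _ (h ▸ hzy) z rfl)

end Hamming

namespace Matrix

variable {n : Type*} [Fintype n] {M : Matrix n n ℝ} {E : ℝ} {G : SimpleGraph n} {v : n → ℝ}

lemma dotProduct_mulVec_abs_le (hoff : ∀ i j, i ≠ j → M i j ≤ 0) (w : n → ℝ) :
    |w| ⬝ᵥ (M *ᵥ |w|) ≤ w ⬝ᵥ (M *ᵥ w) := by
  simp only [dotProduct, mulVec, Finset.mul_sum]
  refine Finset.sum_le_sum fun i _ => Finset.sum_le_sum fun j _ => ?_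
  obtain rfl | hij := eq_or_ne i j
  · simp [mul_left_comm, abs_mul_abs_self]
  · have : w i * w j ≤ |w i| * |w j| := abs_mul (w i) (w j) ▸ le_abs_self _
    simp only [Pi.abs_apply]
    nlinarith [hoff i j hij]

lemma pos_of_adj_of_mulVec_eq_smul (hoff : ∀ i j, i ≠ j → M i j ≤ 0)
    (hadj : ∀ i j, G.Adj i j → M i j < 0) (hv : M *ᵥ v = E • v) (hv0 : 0 ≤ v)
    {i j : n} (hij : G.Adj i j) (hi : 0 < v i) : 0 < v j := by
  refine (hv0 j).lt_of_ne fun hj => ?_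
  have hterms : ∀ k ∈ Finset.univ, M j k * v k ≤ 0 := fun k _ => by
    obtain rfl | hjk := eq_or_ne j k
    · simp [← hj]
    · exact mul_nonpos_of_nonpos_of_nonneg (hoff j k hjk) (hv0 k)
  have hsum : ∑ k, M j k * v k = 0 := by
    simpa [mulVec, dotProduct, ← hj] using congrFun hv j
  have := (Finset.sum_eq_zero_iff_of_nonpos hterms).mp hsum i (Finset.mem_univ i)
  exact (mul_neg_of_neg_of_pos (hadj j i hij.symm) hi).ne this

lemma pos_of_mulVec_eq_smul (hG : G.Preconnected) (hoff : ∀ i j, i ≠ j → M i j ≤ 0)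
    (hadj : ∀ i j, G.Adj i j → M i j < 0) (hv : M *ᵥ v = E • v) (hv0 : 0 ≤ v) (hne : v ≠ 0)
    (i : n) : 0 < v i := by
  obtain ⟨i₀, hi₀⟩ := Function.ne_iff.mp hne
  exact (hG i₀ i).of_forall_adj_imp (fun _ _ => pos_of_adj_of_mulVec_eq_smul hoff hadj hv hv0)
    ((hv0 i₀).lt_of_ne' hi₀)

variable [DecidableEq n]

open scoped MatrixOrder in
lemma IsHermitian.posSemidef_sub_smul_one (hM : M.IsHermitian)
    (hE : ∀ x ∈ spectrum ℝ M, E ≤ x) : (M - E • 1).PosSemidef := by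
  have := (algebraMap_le_iff_le_spectrum (R := ℝ) (a := M) hM.isSelfAdjoint).mpr hE
  rwa [le_iff, Algebra.algebraMap_eq_smul_one] at this

lemma dotProduct_sub_smul_one_mulVec (x : n → ℝ) :
    x ⬝ᵥ ((M - E • 1) *ᵥ x) = x ⬝ᵥ (M *ᵥ x) - E * (x ⬝ᵥ x) := by
  simp only [sub_mulVec, smul_mulVec, one_mulVec, dotProduct_sub, dotProduct_smul, smul_eq_mul]

lemma mulVec_abs_eq_smul_abs (hoff : ∀ i j, i ≠ j → M i j ≤ 0)
    (hE : (M - E • 1).PosSemidef) {w : n → ℝ} (hw : M *ᵥ w = E • w) :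
    M *ᵥ |w| = E • |w| := by
  have hnorm : |w| ⬝ᵥ |w| = w ⬝ᵥ w := by simp [dotProduct, abs_mul_abs_self]
  have hquad : |w| ⬝ᵥ ((M - E • 1) *ᵥ |w|) = 0 := by
    refine le_antisymm ?_ (by simpa using hE.dotProduct_mulVec_nonneg |w|)
    have := dotProduct_mulVec_abs_le hoff w
    rw [hw, dotProduct_smul, smul_eq_mul] at this
    rw [dotProduct_sub_smul_one_mulVec, hnorm]
    linarith
  have := (hE.dotProduct_mulVec_zero_iff |w|).mp (by simpa using hquad)
  rwa [sub_mulVec, smul_mulVec, one_mulVec, sub_eq_zero] at this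

lemma apply_ne_zero_of_mulVec_eq_smul (hG : G.Preconnected) (hoff : ∀ i j, i ≠ j → M i j ≤ 0)
    (hadj : ∀ i j, G.Adj i j → M i j < 0) (hE : (M - E • 1).PosSemidef)
    {w : n → ℝ} (hw : M *ᵥ w = E • w) (hw0 : w ≠ 0) (i : n) : w i ≠ 0 :=
  abs_pos.mp <| pos_of_mulVec_eq_smul hG hoff hadj (mulVec_abs_eq_smul_abs hoff hE hw)
    (abs_nonneg w) (by simpa using hw0) i

lemma finrank_eigenspace_eq_one (hG : G.Connected) (hoff : ∀ i j, i ≠ j → M i j ≤ 0)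
    (hadj : ∀ i j, G.Adj i j → M i j < 0) (hE : (M - E • 1).PosSemidef)
    (hv : M *ᵥ v = E • v) (hvpos : ∀ i, 0 < v i) :
    finrank ℝ (End.eigenspace (mulVecLin M) E) = 1 := by
  obtain ⟨i₀⟩ := hG.nonempty
  have hmem : ∀ w, w ∈ End.eigenspace (mulVecLin M) E ↔ M *ᵥ w = E • w := fun w => by
    rw [End.mem_eigenspace_iff, mulVecLin_apply]
  have hv' := (hmem v).mpr hv
  refine (finrank_eq_one_iff_of_nonzero' ⟨v, hv'⟩ ?_).mpr fun ⟨w, hw⟩ => ⟨w i₀ / v i₀, ?_⟩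
  · simpa using fun h => (hvpos i₀).ne' (congrFun h i₀)
  by_contra hne
  have hd := (hmem _).mp (Submodule.sub_mem _ hw (Submodule.smul_mem _ (w i₀ / v i₀) hv'))
  refine apply_ne_zero_of_mulVec_eq_smul hG.preconnected hoff hadj hE hd ?_ i₀ ?_
  · exact sub_ne_zero.mpr fun h => hne (Subtype.ext h.symm)
  · simp [(hvpos i₀).ne']

theorem IsHermitian.exists_isLeast_spectrum_simple_pos_eigenvector (hM : M.IsHermitian)
    (hG : G.Connected) (hoff : ∀ i j, i ≠ j → M i j ≤ 0) (hadj : ∀ i j, G.Adj i j → M i j < 0) :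
    ∃ E₀ : ℝ, IsLeast (spectrum ℝ M) E₀ ∧ finrank ℝ (End.eigenspace (mulVecLin M) E₀) = 1 ∧
      ∃ v : n → ℝ, M *ᵥ v = E₀ • v ∧ ∀ i, 0 < v i := by
  obtain ⟨i₀⟩ := hG.nonempty
  obtain ⟨E₀, hE₀⟩ := M.finite_real_spectrum.isCompact.exists_isLeast
    ⟨_, hM.eigenvalues_mem_spectrum_real i₀⟩
  have hPSD := hM.posSemidef_sub_smul_one hE₀.2
  obtain ⟨w, hw⟩ := (End.hasEigenvalue_iff_mem_spectrum.mpr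
    ((spectrum_toLin' M).symm ▸ hE₀.1)).exists_hasEigenvector
  have hweig : M *ᵥ w = E₀ • w := by simpa [toLin'_apply'] using hw.apply_eq_smul
  have hv := mulVec_abs_eq_smul_abs hoff hPSD hweig
  have hvpos := pos_of_mulVec_eq_smul hG.preconnected hoff hadj hv (abs_nonneg w)
    (by simpa using hw.2)
  exact ⟨E₀, hE₀, finrank_eigenspace_eq_one hG hoff hadj hPSD hv hvpos, |w|, hv, hvpos⟩

end Matrix

lemma hammingLap_apply_of_ne {N : ℕ} {σ σ' : Fin N → Bool} (h : σ ≠ σ') :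
    hammingLap N σ σ' = if hammingDist σ σ' = 1 then 1 else 0 := by
  simp [hammingLap, h]

lemma hammingLap_isSymm (N : ℕ) : (hammingLap N).IsSymm :=
  IsSymm.ext fun σ σ' => by simp only [hammingLap, eq_comm, hammingDist_comm]

/-- For every `s ∈ [0,1)` and every real diagonal `U`, the matrix
`h(s) = −(1−s)Δ + s·U` has a unique (non-degenerate) lowest eigenvalue, with an
eigenvector having strictly positive entries (Perron–Frobenius). -/
theorem stmt2 (N : ℕ) (s : ℝ) (hs : s ∈ Set.Ico (0 : ℝ) 1)
    (u : (Fin N → Bool) → ℝ) :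
    ∃ E₀ : ℝ,
      IsLeast (spectrum ℝ ((1 - s) • (-(hammingLap N)) + s • Matrix.diagonal u)) E₀ ∧
      Module.finrank ℝ
        (Module.End.eigenspace
          (Matrix.mulVecLin ((1 - s) • (-(hammingLap N)) + s • Matrix.diagonal u)) E₀) = 1 ∧
      ∃ v : (Fin N → Bool) → ℝ,
        ((1 - s) • (-(hammingLap N)) + s • Matrix.diagonal u).mulVec v = E₀ • v ∧
        ∀ σ, 0 < v σ := by
  set M := (1 - s) • (-(hammingLap N)) + s • Matrix.diagonal u
  have hM : M.IsHermitian :=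
    isHermitian_iff_isSymm.mpr <|
      ((hammingLap_isSymm N).neg.smul _).add ((isSymm_diagonal u).smul s)
  have hentry : ∀ σ σ', σ ≠ σ' → M σ σ' = -((1 - s) * hammingLap N σ σ') := fun σ σ' h => by
    simp [M, h]
  have hs1 : 0 < 1 - s := sub_pos.mpr hs.2
  refine hM.exists_isLeast_spectrum_simple_pos_eigenvector hammingGraph_connected
    (fun σ σ' h => ?_) (fun σ σ' h => ?_)
  · rw [hentry σ σ' h, hammingLap_apply_of_ne h]
    split_ifs <;> linarith
  · rw [hentry σ σ' h.ne, hammingLap_apply_of_ne h.ne, if_pos (hammingGraph_adj.mp h)]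
    linarith
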